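/- Let n ≥ 1, let (x̄_1, σ_1), …, (x̄_m, σ_m) be pairwise distinct pairs with x̄_i ∈ ℝⁿ and σ_i > 0. Then the Gaussian kernel functions k_{σ_1}(x̄_1, ·), …, k_{σ_m}(x̄_m, ·) are linearly independent in L²(ℝⁿ); equivalently, if ∑_{i=1}^m α_i k_{σ_i}(x̄_i, x) = 0 for almost every x ∈ ℝⁿ with α ∈ ℝᵐ, then α = 0. -/

import Mathlib

open MeasureTheory Real

open Filter
open scoped RealInnerProductSpace

lemma tendsto_exp_quad (A B : ℝ) (h : 0 < A ∨ (A = 0 ∧ B < 0)) :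
    Tendsto (fun t : ℝ => Real.exp (-A * t ^ 2 + B * t)) atTop (nhds 0) := by
  have key : Tendsto (fun t : ℝ => -A * t ^ 2 + B * t) atTop atBot := by
    have heq : (fun t : ℝ => -A * t ^ 2 + B * t) = fun t : ℝ => t * (B - A * t) := by
      funext t; ring
    rw [heq]
    rcases h with hA | ⟨hA, hB⟩
    · exact Filter.Tendsto.atTop_mul_atBot₀ tendsto_id
        (tendsto_atBot_add_const_left _ B
          (tendsto_neg_atBot_iff.mpr (tendsto_id.const_mul_atTop hA)))
    · simp only [hA, zero_mul, sub_zero]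
      exact Filter.Tendsto.atTop_mul_const_of_neg hB tendsto_id
  exact Real.tendsto_exp_atBot.comp key

lemma exp_lin_indep {E : Type*} [NormedAddCommGroup E] [InnerProductSpace ℝ E] [Nontrivial E]
    {m : ℕ} (a : Fin m → ℝ) (b : Fin m → E)
    (hab : ∀ i j : Fin m, (a i, b i) = (a j, b j) → i = j) :
    ∀ s : Finset (Fin m), ∀ β : Fin m → ℝ,
      (∀ x : E, ∑ i ∈ s, β i * Real.exp (-(a i) * ‖x‖ ^ 2 + ⟪x, b i⟫) = 0) →
      ∀ i ∈ s, β i = 0 := by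
  intro s
  induction s using Finset.strongInduction with
  | _ s IH =>
    intro β hsum
    rcases s.eq_empty_or_nonempty with rfl | hne
    · simp
    -- choose the index with minimal a, then maximal ‖b‖ among those
    set aMin := s.inf' hne a with haMin
    have hSne : (s.filter (fun i => a i = aMin)).Nonempty := by
      obtain ⟨i, hi, hie⟩ := s.exists_mem_eq_inf' hne a
      exact ⟨i, Finset.mem_filter.mpr ⟨hi, hie.symm⟩⟩
    obtain ⟨i0, hi0S, hi0max⟩ :=
      (s.filter (fun i => a i = aMin)).exists_max_image (fun i => ‖b i‖) hSne
    have hi0s : i0 ∈ s := (Finset.mem_filter.mp hi0S).1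
    have hi0a : a i0 = aMin := (Finset.mem_filter.mp hi0S).2
    have hamin : ∀ i ∈ s, a i0 ≤ a i := fun i hi => hi0a ▸ Finset.inf'_le a hi
    -- choose the direction u
    obtain ⟨u, hu0, hustrict⟩ : ∃ u : E, u ≠ 0 ∧
        ∀ i ∈ s, i ≠ i0 → a i = a i0 → ⟪u, b i - b i0⟫ < 0 := by
      by_cases hb0 : b i0 = 0
      · obtain ⟨u, hu⟩ := exists_ne (0 : E)
        refine ⟨u, hu, fun i hi hii0 hai => absurd ?_ hii0⟩
        have hbi : ‖b i‖ ≤ ‖b i0‖ := hi0max i (Finset.mem_filter.mpr ⟨hi, hai.trans hi0a⟩)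
        rw [hb0, norm_zero] at hbi
        have : b i = 0 := norm_le_zero_iff.mp hbi
        exact hab i i0 (by rw [hai, this, hb0])
      · refine ⟨b i0, hb0, fun i hi hii0 hai => ?_⟩
        have hbne : b i ≠ b i0 := fun h => hii0 (hab i i0 (by rw [hai, h]))
        by_contra hcon
        push_neg at hcon
        have h1 : ‖b i0‖ ^ 2 ≤ ⟪b i0, b i⟫ := by
          have := hcon
          rw [inner_sub_right, real_inner_self_eq_norm_sq] at this
          linarith
        have hbi : ‖b i‖ ≤ ‖b i0‖ := hi0max i (Finset.mem_filter.mpr ⟨hi, hai.trans hi0a⟩)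
        have hCS : ⟪b i0, b i⟫ ≤ ‖b i0‖ * ‖b i‖ := real_inner_le_norm _ _
        have hpos : 0 < ‖b i0‖ := norm_pos_iff.mpr hb0
        have hnorm_eq : ‖b i‖ = ‖b i0‖ := by nlinarith [norm_nonneg (b i)]
        have heq : ⟪b i0, b i⟫ = ‖b i0‖ * ‖b i‖ := by nlinarith
        have := (inner_eq_norm_mul_iff_real).mp heq
        rw [hnorm_eq] at this
        have : b i0 = b i := smul_right_injective E (ne_of_gt hpos) this
        exact hbne this.symm
    -- the rescaled sum as a function of t
    have hg : ∀ t : ℝ, ∑ i ∈ s,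
        β i * Real.exp (-((a i - a i0) * ‖u‖ ^ 2) * t ^ 2 + ⟪u, b i - b i0⟫ * t) = 0 := by
      intro t
      have h0 := hsum (t • u)
      have hE : Real.exp (a i0 * ‖t • u‖ ^ 2 - ⟪t • u, b i0⟫) ≠ 0 := Real.exp_ne_zero _
      have : (∑ i ∈ s, β i * Real.exp (-(a i) * ‖t • u‖ ^ 2 + ⟪t • u, b i⟫)) *
          Real.exp (a i0 * ‖t • u‖ ^ 2 - ⟪t • u, b i0⟫) = 0 := by rw [h0, zero_mul]
      rw [Finset.sum_mul] at this
      rw [← this]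
      refine Finset.sum_congr rfl fun i hi => ?_
      have h1 : ‖t • u‖ ^ 2 = t ^ 2 * ‖u‖ ^ 2 := by
        rw [norm_smul, mul_pow, Real.norm_eq_abs, sq_abs]
      have h2 : ⟪t • u, b i⟫ = t * ⟪u, b i⟫ := real_inner_smul_left _ _ _
      have h3 : ⟪t • u, b i0⟫ = t * ⟪u, b i0⟫ := real_inner_smul_left _ _ _
      rw [mul_assoc, ← Real.exp_add, h1, h2, h3, inner_sub_right]
      ring_nf
    -- take the limit t → ∞
    have hβi0 : β i0 = 0 := by
      have hlim : Tendsto (fun t : ℝ => ∑ i ∈ s,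
          β i * Real.exp (-((a i - a i0) * ‖u‖ ^ 2) * t ^ 2 + ⟪u, b i - b i0⟫ * t))
          atTop (nhds (β i0)) := by
        have : Tendsto (fun t : ℝ => ∑ i ∈ s,
            β i * Real.exp (-((a i - a i0) * ‖u‖ ^ 2) * t ^ 2 + ⟪u, b i - b i0⟫ * t))
            atTop (nhds (∑ i ∈ s, if i = i0 then β i0 else 0)) := by
          refine tendsto_finset_sum _ fun i hi => ?_
          by_cases hii0 : i = i0
          · subst hii0
            simp only [if_pos rfl, sub_self, zero_mul, neg_zero, inner_zero_right]
            simpa using tendsto_const_nhds (x := β i * Real.exp 0)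
          · simp only [if_neg hii0]
            rcases lt_or_eq_of_le (hamin i hi) with hlt | heq
            · have hA : 0 < (a i - a i0) * ‖u‖ ^ 2 :=
                mul_pos (sub_pos.mpr hlt) (pow_pos (norm_pos_iff.mpr hu0) 2)
              have := (tendsto_exp_quad ((a i - a i0) * ‖u‖ ^ 2) ⟪u, b i - b i0⟫
                (Or.inl hA)).const_mul (β i)
              simpa using this
            · have hB := hustrict i hi hii0 heq.symm
              have hA : (a i - a i0) * ‖u‖ ^ 2 = 0 := by rw [← heq]; ring
              have := (tendsto_exp_quad ((a i - a i0) * ‖u‖ ^ 2) ⟪u, b i - b i0⟫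
                (Or.inr ⟨hA, hB⟩)).const_mul (β i)
              simpa using this
        have hval : (∑ i ∈ s, if i = i0 then β i0 else 0) = β i0 := by
          rw [Finset.sum_ite_eq' s i0 (fun _ => β i0)]; simp [hi0s]
        rwa [hval] at this
      have hzero : Tendsto (fun _ : ℝ => (0 : ℝ)) atTop (nhds 0) := tendsto_const_nhds
      have := tendsto_nhds_unique (hlim.congr (fun t => (hg t))) hzero
      exact this
    -- conclude by induction on s.erase i0
    intro i his
    by_cases hii0 : i = i0
    · rw [hii0]; exact hβi0
    · refine IH (s.erase i0) (Finset.erase_ssubset hi0s) β (fun x => ?_) i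
        (Finset.mem_erase.mpr ⟨hii0, his⟩)
      have := hsum x
      rw [← Finset.sum_erase_add s _ hi0s, hβi0, zero_mul, add_zero] at this
      exact this

/-- Gaussian kernel functions with pairwise distinct (center, width) pairs are
linearly independent in L²(ℝⁿ): if a linear combination vanishes almost
everywhere, all coefficients are zero. -/
theorem gaussian_kernels_linearIndependent
    (n : ℕ) (hn : 1 ≤ n) (m : ℕ) (xb : Fin m → EuclideanSpace ℝ (Fin n))
    (σ : Fin m → ℝ) (hσ : ∀ i, 0 < σ i)
    (hdist : ∀ i j : Fin m, i ≠ j → (xb i, σ i) ≠ (xb j, σ j)) :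
    ∀ α : Fin m → ℝ,
      (∀ᵐ x : EuclideanSpace ℝ (Fin n),
        ∑ i, α i * ((2 * π) ^ (-(n : ℝ) / 2) * σ i ^ (-(n : ℝ)) *
          Real.exp (-‖x - xb i‖ ^ 2 / (2 * σ i ^ 2))) = 0) →
      α = 0 := by
  haveI : Nonempty (Fin n) := ⟨⟨0, hn⟩⟩
  intro α hae
  -- from a.e. to everywhere, by continuity
  have hcont : Continuous (fun x : EuclideanSpace ℝ (Fin n) =>
      ∑ i, α i * ((2 * π) ^ (-(n : ℝ) / 2) * σ i ^ (-(n : ℝ)) *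
        Real.exp (-‖x - xb i‖ ^ 2 / (2 * σ i ^ 2)))) := by fun_prop
  have hpt : ∀ x : EuclideanSpace ℝ (Fin n),
      ∑ i, α i * ((2 * π) ^ (-(n : ℝ) / 2) * σ i ^ (-(n : ℝ)) *
        Real.exp (-‖x - xb i‖ ^ 2 / (2 * σ i ^ 2))) = 0 := by
    have := (Continuous.ae_eq_iff_eq volume hcont continuous_const).mp hae
    exact fun x => congrFun this x
  -- set up the data for the abstract lemma
  set a : Fin m → ℝ := fun i => 1 / (2 * σ i ^ 2) with ha
  set b : Fin m → EuclideanSpace ℝ (Fin n) := fun i => (σ i ^ 2)⁻¹ • xb i with hb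
  set β : Fin m → ℝ := fun i => α i * ((2 * π) ^ (-(n : ℝ) / 2) * σ i ^ (-(n : ℝ)) *
      Real.exp (-‖xb i‖ ^ 2 / (2 * σ i ^ 2))) with hβ
  have hσ2 : ∀ i, (σ i ^ 2) ≠ 0 := fun i => pow_ne_zero 2 (hσ i).ne'
  have hab : ∀ i j : Fin m, (a i, b i) = (a j, b j) → i = j := by
    intro i j hij
    by_contra hne
    have h1 : a i = a j := congrArg Prod.fst hij
    have h2 : b i = b j := congrArg Prod.snd hij
    have hσeq : σ i = σ j := by
      have hsq : σ i ^ 2 = σ j ^ 2 := by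
        have h1' : 1 / (2 * σ i ^ 2) = 1 / (2 * σ j ^ 2) := h1
        field_simp [hσ2 i, hσ2 j] at h1'
        rwa [one_div, one_div, inv_inj] at h1'
      nlinarith [hσ i, hσ j]
    have hxeq : xb i = xb j := by
      have := h2
      rw [hb] at this
      simp only at this
      rw [hσeq] at this
      exact smul_right_injective _ (inv_ne_zero (hσ2 j)) this
    exact hdist i j hne (by rw [hxeq, hσeq])
  have hkey : ∀ x : EuclideanSpace ℝ (Fin n),
      ∑ i ∈ Finset.univ, β i * Real.exp (-(a i) * ‖x‖ ^ 2 + ⟪x, b i⟫) = 0 := by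
    intro x
    rw [← hpt x]
    refine Finset.sum_congr rfl fun i _ => ?_
    have hinner : ⟪x, b i⟫ = (σ i ^ 2)⁻¹ * ⟪x, xb i⟫ := real_inner_smul_right _ _ _
    have hns : ‖x - xb i‖ ^ 2 = ‖x‖ ^ 2 - 2 * ⟪x, xb i⟫ + ‖xb i‖ ^ 2 :=
      norm_sub_sq_real x (xb i)
    have hQ : -‖xb i‖ ^ 2 / (2 * σ i ^ 2) +
        (-(1 / (2 * σ i ^ 2)) * ‖x‖ ^ 2 + (σ i ^ 2)⁻¹ * ⟪x, xb i⟫) =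
        -‖x - xb i‖ ^ 2 / (2 * σ i ^ 2) := by
      rw [hns]; field_simp; ring
    calc β i * Real.exp (-(a i) * ‖x‖ ^ 2 + ⟪x, b i⟫)
        = α i * ((2 * π) ^ (-(n : ℝ) / 2) * σ i ^ (-(n : ℝ))) *
          (Real.exp (-‖xb i‖ ^ 2 / (2 * σ i ^ 2)) *
           Real.exp (-(1 / (2 * σ i ^ 2)) * ‖x‖ ^ 2 + (σ i ^ 2)⁻¹ * ⟪x, xb i⟫)) := by
          rw [hβ, hinner, ha]; ring
      _ = α i * ((2 * π) ^ (-(n : ℝ) / 2) * σ i ^ (-(n : ℝ))) *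
          Real.exp (-‖xb i‖ ^ 2 / (2 * σ i ^ 2) +
            (-(1 / (2 * σ i ^ 2)) * ‖x‖ ^ 2 + (σ i ^ 2)⁻¹ * ⟪x, xb i⟫)) := by
          rw [← Real.exp_add]
      _ = α i * ((2 * π) ^ (-(n : ℝ) / 2) * σ i ^ (-(n : ℝ)) *
          Real.exp (-‖x - xb i‖ ^ 2 / (2 * σ i ^ 2))) := by rw [hQ]; ring
  have hβ0 := exp_lin_indep a b hab Finset.univ β hkey
  funext i
  have := hβ0 i (Finset.mem_univ i)
  rw [hβ] at this
  simp only at this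
  have hpos : 0 < (2 * π) ^ (-(n : ℝ) / 2) * σ i ^ (-(n : ℝ)) *
      Real.exp (-‖xb i‖ ^ 2 / (2 * σ i ^ 2)) := by
    apply mul_pos
    apply mul_pos
    · exact Real.rpow_pos_of_pos (by positivity) _
    · exact Real.rpow_pos_of_pos (hσ i) _
    · exact Real.exp_pos _
  have := (mul_eq_zero.mp this).resolve_right (ne_of_gt hpos)
  simpa using this
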